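/- arXiv:2309.15659 — 2 statements merged into one kernel-verified Lean document; each statement's English description precedes it below -/
import Mathlib

section
/- Let b ∈ ℝ^n, κ > 0, and let γ* ≥ 0 be an optimal dual variable for the problem min_{‖a‖₁ ≤ κ} (1/2)‖a − b‖₂². Then γ* ≤ ‖b‖₂² / (2κ). -/
/-! Comparing the dual objective at `γ*` with its value at `γ = 0`: at `γ = 0` the inner
minimum is nonnegative, while at any `γ` the choice `a = 0` bounds it by `‖b‖₂² / 2`.
Optimality of `γ*` then gives `0 ≤ −κγ* + ‖b‖₂² / 2`. -/

section L1Prox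

variable {ι : Type*} [Fintype ι] (b : ι → ℝ) {γ : ℝ}

lemma l1ProxObjective_nonneg (hγ : 0 ≤ γ) (a : EuclideanSpace ℝ ι) :
    0 ≤ (1/2) * ∑ m, (a m - b m)^2 + γ * ∑ m, |a m| := by
  positivity

lemma iInf_l1ProxObjective_nonneg (hγ : 0 ≤ γ) :
    0 ≤ ⨅ a : EuclideanSpace ℝ ι, ((1/2) * ∑ m, (a m - b m)^2 + γ * ∑ m, |a m|) :=
  Real.iInf_nonneg (l1ProxObjective_nonneg b hγ)

lemma iInf_l1ProxObjective_le (hγ : 0 ≤ γ) :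
    ⨅ a : EuclideanSpace ℝ ι, ((1/2) * ∑ m, (a m - b m)^2 + γ * ∑ m, |a m|)
      ≤ (1/2) * ∑ m, (b m)^2 := by
  have hbdd : BddBelow (Set.range fun a : EuclideanSpace ℝ ι =>
      (1/2) * ∑ m, (a m - b m)^2 + γ * ∑ m, |a m|) :=
    ⟨0, Set.forall_mem_range.2 (l1ProxObjective_nonneg b hγ)⟩
  simpa using ciInf_le hbdd 0

end L1Prox

/-- Bound on the optimal dual variable for the projection of `b` onto the ℓ1-ball of
radius `κ`: if `γ* ≥ 0` maximizes the dual objective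
`γ ↦ −κγ + inf_a [(1/2)‖a − b‖₂² + γ‖a‖₁]` over `γ ≥ 0`, then `γ* ≤ ‖b‖₂²/(2κ)`. -/
theorem dual_variable_bound {n : ℕ} (b : Fin n → ℝ) (κ : ℝ) (hκ : 0 < κ)
    (D : ℝ → ℝ)
    (hD : D = fun γ => -κ * γ +
      ⨅ a : EuclideanSpace ℝ (Fin n), ((1/2) * ∑ m, (a m - b m)^2 + γ * ∑ m, |a m|))
    (γstar : ℝ) (hγstar : 0 ≤ γstar)
    (hopt : ∀ γ : ℝ, 0 ≤ γ → D γ ≤ D γstar) :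
    γstar ≤ (∑ m, (b m)^2) / (2 * κ) := by
  subst hD
  have hzero := iInf_l1ProxObjective_nonneg b le_rfl
  have hstar := iInf_l1ProxObjective_le b hγstar
  have hmax := hopt 0 le_rfl
  rw [le_div_iff₀ (by positivity)]
  linarith
end

section
/- Assume each L_i is differentiable with L-Lipschitz gradient in θ_i, ρ > 5L, the global loss L(θ, {w_i}) = Σ_i L_i(θ, w_i) is bounded below by a finite value L̲, and the dual variables satisfy λ_i = −∇_{θ_i} L_i(θ_i, w_i) − L(θ_i − θ). Then the global augmented Lagrangian satisfies L̃(θ, {θ_i}, {w_i}, {λ_i}) ≥ L(θ, {w_i}) + ((ρ − 5L)/2) Σ_i ‖θ_i − θ‖² ≥ L̲. -/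
/-!
For each client, the descent lemma at `θ_i` together with the choice of `λ_i` gives
`L_i(θ_i, w_i) + ⟪λ_i, θ_i - θ⟫ ≥ L_i(θ, w_i) - 2L‖θ_i - θ‖²`; summing and adding the penalty
`(ρ/2)‖θ_i - θ‖²` yields the first bound, and `ρ > 5L` makes the penalty term nonnegative.
-/

open scoped RealInnerProductSpace NNReal

section LipschitzGradient

variable {E : Type*} [NormedAddCommGroup E] [InnerProductSpace ℝ E] [CompleteSpace E]
  {f : E → ℝ} {L : ℝ≥0}

/-- A crude descent lemma (constant `L` rather than the sharp `L / 2`): the first-order Taylor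
remainder is controlled by the mean value inequality applied to `fderiv f - fderiv f x`. -/
theorem LipschitzWith.apply_le_add_inner_gradient_add_mul_norm_sq (hf : Differentiable ℝ f)
    (hL : LipschitzWith L (gradient f)) (x y : E) :
    f y ≤ f x + ⟪gradient f x, y - x⟫ + L * ‖y - x‖ ^ 2 := by
  have hfderiv : ∀ z, fderiv ℝ f z = InnerProductSpace.toDual ℝ E (gradient f z) :=
    fun z => ((InnerProductSpace.toDual ℝ E).apply_symm_apply _).symm
  have hremainder : ‖f y - f x - fderiv ℝ f x (y - x)‖ ≤ L * ‖y - x‖ * ‖y - x‖ := by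
    refine (convex_closedBall x ‖y - x‖).norm_image_sub_le_of_norm_fderiv_le'
      (fun z _ => hf z) (fun z hz => ?_) (Metric.mem_closedBall_self (norm_nonneg _))
      (by rw [Metric.mem_closedBall, dist_eq_norm])
    rw [hfderiv, hfderiv, ← map_sub, LinearIsometryEquiv.norm_map, ← dist_eq_norm]
    exact (hL.dist_le_mul z x).trans
      (mul_le_mul_of_nonneg_left (Metric.mem_closedBall.mp hz) L.coe_nonneg)
  rw [hfderiv, InnerProductSpace.toDual_apply_apply] at hremainder
  linarith [(abs_le.mp (Real.norm_eq_abs _ ▸ hremainder)).2]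

theorem LipschitzWith.apply_sub_le_add_inner_of_eq_neg_gradient (hf : Differentiable ℝ f)
    (hL : LipschitzWith L (gradient f)) {u v lam : E}
    (hlam : lam = -gradient f u - (L : ℝ) • (u - v)) :
    f v - 2 * L * ‖u - v‖ ^ 2 ≤ f u + ⟪lam, u - v⟫ := by
  have hdescent := hL.apply_le_add_inner_gradient_add_mul_norm_sq hf u v
  have hinner : ⟪lam, u - v⟫ = ⟪gradient f u, v - u⟫ - L * ‖u - v‖ ^ 2 := by
    rw [hlam, inner_sub_left, inner_neg_left, real_inner_smul_left, real_inner_self_eq_norm_sq,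
      ← inner_neg_right, neg_sub]
  rw [norm_sub_rev] at hdescent
  linarith

end LipschitzGradient

/-- Lower bound for the global augmented Lagrangian: if each `L_i` has `L`-Lipschitz
gradient in `θ_i`, `ρ > 5L`, the global loss is bounded below by `L̲`, and the dual
variables satisfy `λ_i = −∇_{θ_i} L_i(θ_i, w_i) − L(θ_i − θ)`, then
`L̃ ≥ L(θ, {w_i}) + ((ρ − 5L)/2) Σ_i ‖θ_i − θ‖² ≥ L̲`. -/
theorem aug_lagrangian_lower_bound {n d₁ d₂ : ℕ}
    (Li : Fin n → EuclideanSpace ℝ (Fin d₁) × EuclideanSpace ℝ (Fin d₂) → ℝ)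
    (hdiff : ∀ i, Differentiable ℝ (Li i))
    (L : ℝ≥0)
    (hLip : ∀ i w, LipschitzWith L (gradient (fun θ' => Li i (θ', w))))
    (ρ : ℝ) (hρ : ρ > 5 * L)
    (Lbar : ℝ)
    (hlb : ∀ (θ : EuclideanSpace ℝ (Fin d₁)) (w : Fin n → EuclideanSpace ℝ (Fin d₂)),
      Lbar ≤ ∑ i, Li i (θ, w i))
    (θ : EuclideanSpace ℝ (Fin d₁))
    (θi lam : Fin n → EuclideanSpace ℝ (Fin d₁))
    (wi : Fin n → EuclideanSpace ℝ (Fin d₂))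
    (hlam : ∀ i, lam i = -gradient (fun θ' => Li i (θ', wi i)) (θi i)
      - (L : ℝ) • (θi i - θ)) :
    (∑ i, (Li i (θi i, wi i) + ⟪lam i, θi i - θ⟫ + (ρ / 2) * ‖θi i - θ‖^2)) ≥
      (∑ i, Li i (θ, wi i)) + ((ρ - 5 * L) / 2) * ∑ i, ‖θi i - θ‖^2 ∧
    (∑ i, Li i (θ, wi i)) + ((ρ - 5 * L) / 2) * ∑ i, ‖θi i - θ‖^2 ≥ Lbar := by
  have hterm : ∀ i, Li i (θ, wi i) + ((ρ - 5 * L) / 2) * ‖θi i - θ‖ ^ 2 ≤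
      Li i (θi i, wi i) + ⟪lam i, θi i - θ⟫ + (ρ / 2) * ‖θi i - θ‖ ^ 2 := fun i => by
    have hpartial : Differentiable ℝ (fun θ' => Li i (θ', wi i)) :=
      (hdiff i).comp (differentiable_id.prodMk (differentiable_const _))
    have := (hLip i (wi i)).apply_sub_le_add_inner_of_eq_neg_gradient hpartial (hlam i)
    linarith [mul_nonneg L.coe_nonneg (sq_nonneg ‖θi i - θ‖)]
  have hpenalty : 0 ≤ ((ρ - 5 * L) / 2) * ∑ i, ‖θi i - θ‖ ^ 2 :=
    mul_nonneg (by linarith) (Finset.sum_nonneg fun i _ => sq_nonneg _)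
  refine ⟨?_, by linarith [hlb θ wi]⟩
  rw [Finset.mul_sum, ← Finset.sum_add_distrib]
  exact Finset.sum_le_sum fun i _ => hterm i
end
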